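/- arXiv:2210.14247 — 3 statements merged into one kernel-verified Lean document; each statement's English description precedes it below -/
import Mathlib

section
/- For all matrix compositions a, b over M_d, every matrix c^{p,q} occurring as a summand in the two-parameter quasi-shuffle a ⧢ b is again a matrix composition (it has no row and no column all of whose entries are ε); moreover, letting ω : M_d → ℕ₀ be the monoid homomorphism sending every generator to 1 and setting ω(a) := Σ_{i,j} ω(a_{i,j}), every summand c^{p,q} of a ⧢ b satisfies ω(c^{p,q}) = ω(a) + ω(b). -/
open scoped Classical

namespace TwoParam

/-! ### The free commutative monoid on `d` generators, written additively -/

abbrev Md (d : ℕ) := Fin d →₀ ℕ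

/-! ### Raw matrices over `Md d` and matrix compositions

A raw matrix is a function `ℕ → ℕ → Md d` together with a number of rows and
columns, normalized to be `0` (= the neutral element `ε`) outside the range.
The empty composition is the `0 × 0` matrix. -/

structure RawMat (d : ℕ) where
  rows : ℕ
  cols : ℕ
  entry : ℕ → ℕ → Md d
  entry_eq_zero : ∀ i j : ℕ, rows ≤ i ∨ cols ≤ j → entry i j = 0

namespace RawMat

variable {d : ℕ}

/-- A matrix composition: no row and no column consists entirely of `ε`.
(The empty `0 × 0` matrix vacuously satisfies this.) -/
def IsComp (a : RawMat d) : Prop :=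
  (∀ i < a.rows, ∃ j < a.cols, a.entry i j ≠ 0) ∧
  (∀ j < a.cols, ∃ i < a.rows, a.entry i j ≠ 0)

/-- The empty composition. -/
def empty (d : ℕ) : RawMat d := ⟨0, 0, fun _ _ => 0, fun _ _ _ => rfl⟩

/-- Diagonal block concatenation of two matrices. -/
def diag (a b : RawMat d) : RawMat d where
  rows := a.rows + b.rows
  cols := a.cols + b.cols
  entry := fun i j =>
    if i < a.rows ∧ j < a.cols then a.entry i j
    else if a.rows ≤ i ∧ a.cols ≤ j then b.entry (i - a.rows) (j - a.cols)
    else 0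
  entry_eq_zero := by
    intro i j h
    try dsimp only
    split_ifs with h1 h2
    · exact absurd h (by omega)
    · exact b.entry_eq_zero _ _ (by omega)
    · rfl

/-- A non-empty composition is connected if it admits no nontrivial
block-diagonal decomposition into compositions. -/
def Connected (a : RawMat d) : Prop :=
  a.IsComp ∧ a ≠ empty d ∧
    ∀ b c : RawMat d, b.IsComp → c.IsComp → a = b.diag c →
      b = empty d ∨ c = empty d

/-- Total weight of a matrix: the homomorphism `Md d → ℕ` sending every
generator to `1`, summed over all entries. -/
def weight (a : RawMat d) : ℕ :=
  ∑ i ∈ Finset.range a.rows, ∑ j ∈ Finset.range a.cols,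
    (a.entry i j).sum fun _ e => e

end RawMat

/-! ### Evaluation of monomials -/

/-- For `z ∈ R^d` and `m ∈ Md d`, the evaluation `z^(m) = ∏ j, z j ^ m j`. -/
def evalMon {d : ℕ} {R : Type*} [CommRing R] (z : Fin d → R) (m : Md d) : R :=
  m.prod fun j e => z j ^ e

/-! ### Two-parameter sums signature -/

/-- Strictly increasing chains of length `m` with values in `[lo, hi)`
(0-based indexing of the data). -/
noncomputable def chainsB (m lo hi : ℕ) : Finset (Fin m → ℕ) :=
  (Fintype.piFinset fun _ : Fin m => Finset.Ico lo hi).filter StrictMono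

/-- The bounded two-parameter sums signature coefficient `⟨SS_{l;r}(Z), a⟩`. -/
noncomputable def SSb {d : ℕ} {R : Type*} [CommRing R]
    (Z : ℕ × ℕ → Fin d → R) (l r : ℕ × ℕ) (a : RawMat d) : R :=
  ∑ ι ∈ chainsB a.rows l.1 r.1, ∑ κ ∈ chainsB a.cols l.2 r.2,
    ∏ s : Fin a.rows, ∏ t : Fin a.cols, evalMon (Z (ι s, κ t)) (a.entry s t)

/-- The (unbounded) two-parameter sums signature coefficient `⟨SS(Z), a⟩`,
for finitely supported `Z` a finite sum. -/
noncomputable def SSc {d : ℕ} {R : Type*} [CommRing R]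
    (Z : ℕ × ℕ → Fin d → R) (a : RawMat d) : R :=
  ∑ᶠ ι ∈ {f : Fin a.rows → ℕ | StrictMono f},
    ∑ᶠ κ ∈ {g : Fin a.cols → ℕ | StrictMono g},
      ∏ s : Fin a.rows, ∏ t : Fin a.cols, evalMon (Z (ι s, κ t)) (a.entry s t)

/-! ### Quasi-shuffle surjections -/

/-- `qShSet m s j`: surjections `{1,…,m+s} ↠ {1,…,j}` that are strictly
increasing on the first `m` and on the last `s` arguments. -/
noncomputable def qShSet (m s j : ℕ) : Finset (Fin (m + s) → Fin j) :=
  Finset.univ.filter fun q =>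
    Function.Surjective q ∧
    (∀ u v : Fin (m + s), u < v → (v : ℕ) < m → q u < q v) ∧
    (∀ u v : Fin (m + s), u < v → m ≤ (u : ℕ) → q u < q v)

/-- The summand `c^{p,q}` of the two-parameter quasi-shuffle: the `j × k`
matrix with entries `⋆_{u ∈ p⁻¹(x), v ∈ q⁻¹(y)} diag(a,b)_{u,v}`. -/
noncomputable def qshMat {d : ℕ} (a b : RawMat d) {j k : ℕ}
    (p : Fin (a.rows + b.rows) → Fin j) (q : Fin (a.cols + b.cols) → Fin k) :
    RawMat d where
  rows := j
  cols := k
  entry := fun x y =>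
    if hx : x < j then
      if hy : y < k then
        ∑ u ∈ Finset.univ.filter (fun u => p u = ⟨x, hx⟩),
          ∑ v ∈ Finset.univ.filter (fun v => q v = ⟨y, hy⟩),
            (a.diag b).entry u v
      else 0
    else 0
  entry_eq_zero := by
    intro x y h
    try dsimp only
    split_ifs with hx hy
    · exact absurd h (by omega)
    · rfl
    · rfl

/-- The two-parameter quasi-shuffle `a ⧢ b`, as an element of the free
`R`-module on matrices.  (The empty index sets for `j` or `k` outside
`[0, rows+rows]` resp. `[0, cols+cols]` implement the conventions
`e ⧢ a = a ⧢ e = a` and `e ⧢ e = e`.) -/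
noncomputable def qsh {d : ℕ} (R : Type*) [CommRing R] (a b : RawMat d) :
    RawMat d →₀ R :=
  ∑ j ∈ Finset.range (a.rows + b.rows + 1),
    ∑ k ∈ Finset.range (a.cols + b.cols + 1),
      ∑ p ∈ qShSet a.rows b.rows j,
        ∑ q ∈ qShSet a.cols b.cols k,
          Finsupp.single (qshMat a b p q) 1

/-- Bilinear extension of the quasi-shuffle to the free module. -/
noncomputable def qshL {d : ℕ} {R : Type*} [CommRing R]
    (F G : RawMat d →₀ R) : RawMat d →₀ R :=
  F.sum fun a ra => G.sum fun b rb => (ra * rb) • qsh R a b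

/-! ### Two-parameter data: eventually zero / eventually constant functions -/

variable {V : Type*}

/-- Eventually zero two-parameter data: finite support. -/
def EvZ [Zero V] (X : ℕ × ℕ → V) : Prop := (Function.support X).Finite

/-- Eventually constant two-parameter data: there is a box outside of which
`X` is constant; i.e. whenever two values differ, one of the two indices lies
in the box. -/
def EvC (X : ℕ × ℕ → V) : Prop :=
  ∃ n : ℕ × ℕ, ∀ i j : ℕ × ℕ, X i ≠ X j →
    (i.1 ≤ n.1 ∧ i.2 ≤ n.2) ∨ (j.1 ≤ n.1 ∧ j.2 ≤ n.2)

/-- The coordinate of `i` along the axis `a` (axis `0` = rows, `1` = cols). -/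
def axC (a : Fin 2) (i : ℕ × ℕ) : ℕ := if a = 0 then i.1 else i.2

/-- Shift an index one step down along the axis `a`. -/
def shiftD (a : Fin 2) (i : ℕ × ℕ) : ℕ × ℕ :=
  if a = 0 then (i.1 - 1, i.2) else (i.1, i.2 - 1)

/-- The zero insertion operator (0-based position `k`): insert a zero
row/column at position `k` along axis `a`. -/
def zeroIns [Zero V] (a : Fin 2) (k : ℕ) (X : ℕ × ℕ → V) : ℕ × ℕ → V :=
  fun i => if axC a i < k then X i else if axC a i = k then 0 else X (shiftD a i)

/-- The warping operator (0-based position `k`): duplicate the row/column at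
position `k` along axis `a`. -/
def warp (a : Fin 2) (k : ℕ) (X : ℕ × ℕ → V) : ℕ × ℕ → V :=
  fun i => if axC a i ≤ k then X i else X (shiftD a i)

/-- The two-parameter (forward) difference operator `δ`. -/
def diffOp [AddCommGroup V] (X : ℕ × ℕ → V) : ℕ × ℕ → V := fun i =>
  X (i.1 + 1, i.2 + 1) - X (i.1 + 1, i.2) - X (i.1, i.2 + 1) + X (i.1, i.2)

/-- The summation operator `ς`, a right inverse of `δ`:
`(ς Z)_{i,j} = Σ_{s ≥ i} Σ_{t ≥ j} Z_{s,t}`. -/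
noncomputable def sigmaOp [AddCommMonoid V] (Z : ℕ × ℕ → V) : ℕ × ℕ → V :=
  fun i => ∑ᶠ p ∈ {p : ℕ × ℕ | i.1 ≤ p.1 ∧ i.2 ≤ p.2}, Z p

/-- The set of all `n ∈ ℕ²` such that `X` is determined inside the
`n.1 × n.2` upper-left box (0-based size/count convention). -/
def sizeSetC (X : ℕ × ℕ → V) : Set (ℕ × ℕ) :=
  {n | ∀ i j : ℕ × ℕ, X i ≠ X j →
    (i.1 < n.1 ∧ i.2 < n.2) ∨ (j.1 < n.1 ∧ j.2 < n.2)}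

/-- `rows(X)` for eventually constant `X`: first component of the least
element of `sizeSetC X`. -/
noncomputable def rowsC (X : ℕ × ℕ → V) : ℕ := sInf (Prod.fst '' sizeSetC X)

/-- `cols(X)` for eventually constant `X`. -/
noncomputable def colsC (X : ℕ × ℕ → V) : ℕ := sInf (Prod.snd '' sizeSetC X)

/-- `rows(Z)` for eventually zero `Z`, defined via the support. -/
noncomputable def rowsZ [Zero V] (Z : ℕ × ℕ → V) : ℕ :=
  sInf {m : ℕ | ∀ i : ℕ × ℕ, Z i ≠ 0 → i.1 < m}

/-- `cols(Z)` for eventually zero `Z`, defined via the support. -/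
noncomputable def colsZ [Zero V] (Z : ℕ × ℕ → V) : ℕ :=
  sInf {m : ℕ | ∀ i : ℕ × ℕ, Z i ≠ 0 → i.2 < m}

/-- Diagonal concatenation `A ⊘ B` on eventually zero functions,
with `rows`/`cols` taken in the eventually-constant sense. -/
noncomputable def dconc [AddCommGroup V] (A B : ℕ × ℕ → V) : ℕ × ℕ → V :=
  A + (zeroIns 0 0)^[rowsC A] ((zeroIns 1 0)^[colsC A] B)

/-- Diagonal concatenation `A ⊘ B` on eventually zero functions,
with `rows`/`cols` taken in the support sense. -/
noncomputable def dconcZ [AddCommGroup V] (A B : ℕ × ℕ → V) : ℕ × ℕ → V :=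
  A + (zeroIns 0 0)^[rowsZ A] ((zeroIns 1 0)^[colsZ A] B)

/-- Concatenation along the diagonal `X ⊠ Y` on eventually constant
functions: `ς(δX) + Warp_{1,1}^{rows X}(Warp_{2,1}^{cols X}(Y))`. -/
noncomputable def bconc [AddCommGroup V] (X Y : ℕ × ℕ → V) : ℕ × ℕ → V :=
  sigmaOp (diffOp X) + (warp 0 0)^[rowsC X] ((warp 1 0)^[colsC X] Y)


/-! ### Two-parameter quasisymmetric functions -/

/-- Monomials in the commuting variables `x_{i,j}`, `(i,j) ∈ ℕ × ℕ`. -/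
abbrev Mon := (ℕ × ℕ) →₀ ℕ

/-- Total degree of a monomial. -/
def mdeg (m : Mon) : ℕ := m.sum fun _ e => e

/-- A formal power series (given by its coefficient function) has finite
total degree. -/
def FinDeg {R : Type*} [Zero R] (f : Mon → R) : Prop :=
  ∃ D : ℕ, ∀ m : Mon, f m ≠ 0 → mdeg m ≤ D

/-- `ℕ₀`-valued raw matrices, normalized to vanish outside the range. -/
structure NMat where
  rows : ℕ
  cols : ℕ
  entry : ℕ → ℕ → ℕ
  entry_eq_zero : ∀ i j : ℕ, rows ≤ i ∨ cols ≤ j → entry i j = 0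

namespace NMat

/-- An `ℕ₀`-matrix composition: no zero row and no zero column. -/
def IsComp (a : NMat) : Prop :=
  (∀ i < a.rows, ∃ j < a.cols, a.entry i j ≠ 0) ∧
  (∀ j < a.cols, ∃ i < a.rows, a.entry i j ≠ 0)

/-- The empty composition. -/
def empty : NMat := ⟨0, 0, fun _ _ => 0, fun _ _ _ => rfl⟩

/-- Diagonal block concatenation. -/
def diag (a b : NMat) : NMat where
  rows := a.rows + b.rows
  cols := a.cols + b.cols
  entry := fun i j =>
    if i < a.rows ∧ j < a.cols then a.entry i j
    else if a.rows ≤ i ∧ a.cols ≤ j then b.entry (i - a.rows) (j - a.cols)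
    else 0
  entry_eq_zero := by
    intro i j h
    try dsimp only
    split_ifs with h1 h2
    · exact absurd h (by omega)
    · exact b.entry_eq_zero _ _ (by omega)
    · rfl

end NMat

/-- The monomial `∏_{s,t} x_{ι_s, κ_t}^{a_{s,t}}` attached to a matrix `a`
and chains `ι`, `κ`. -/
noncomputable def monomialOf (a : NMat) (ι : Fin a.rows → ℕ) (κ : Fin a.cols → ℕ) : Mon :=
  ∑ s : Fin a.rows, ∑ t : Fin a.cols, Finsupp.single (ι s, κ t) (a.entry s t)

/-- The monomial quasisymmetric function `M_a` (as a coefficient function):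
each monomial `∏ x_{ι_s,κ_t}^{a_{s,t}}` for strictly increasing chains occurs
with coefficient `1`.  In particular `M_e = 1`. -/
noncomputable def monQ {R : Type*} [CommRing R] (a : NMat) : Mon → R := fun m =>
  if ∃ (ι : Fin a.rows → ℕ) (κ : Fin a.cols → ℕ),
      StrictMono ι ∧ StrictMono κ ∧ m = monomialOf a ι κ
  then 1 else 0

/-- Two-parameter quasisymmetric function: finite degree, and for every
matrix composition `a` and all strictly increasing chains `ι`, `κ`, the
coefficients of `∏ x_{ι_s,κ_t}^{a_{s,t}}` and of `∏ x_{s,t}^{a_{s,t}}`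
coincide. -/
def IsQSym {R : Type*} [CommRing R] (f : Mon → R) : Prop :=
  FinDeg f ∧ ∀ a : NMat, a.IsComp →
    ∀ (ι : Fin a.rows → ℕ) (κ : Fin a.cols → ℕ), StrictMono ι → StrictMono κ →
      f (monomialOf a ι κ) =
        f (monomialOf a (fun s => (s : ℕ)) (fun t => (t : ℕ)))

/-- Product of formal power series (Cauchy product of coefficient
functions). -/
noncomputable def mulF {R : Type*} [CommRing R] (f g : Mon → R) : Mon → R :=
  fun m => ∑ p ∈ Finset.HasAntidiagonal.antidiagonal m, f p.1 * g p.2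

/-- Two-parameter quasisymmetric functions form an `R`-submodule of the
module of coefficient functions. -/
noncomputable def QSymSub (R : Type*) [CommRing R] : Submodule R (Mon → R) where
  carrier := {f | IsQSym f}
  add_mem' := by
    rintro f g ⟨⟨Df, hDf⟩, hf⟩ ⟨⟨Dg, hDg⟩, hg⟩
    refine ⟨⟨max Df Dg, ?_⟩, ?_⟩
    · intro m hm
      by_contra hc
      push_neg at hc
      have h1 : f m = 0 := by
        by_contra h
        have := hDf m h
        omega
      have h2 : g m = 0 := by
        by_contra h
        have := hDg m h
        omega
      apply hm
      show f m + g m = 0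
      rw [h1, h2, add_zero]
    · intro a ha ι κ hι hκ
      show f _ + g _ = f _ + g _
      rw [hf a ha ι κ hι hκ, hg a ha ι κ hι hκ]
  zero_mem' := ⟨⟨0, fun _ hm => absurd rfl hm⟩, fun _ _ _ _ _ _ => rfl⟩
  smul_mem' := by
    rintro c f ⟨⟨Df, hDf⟩, hf⟩
    refine ⟨⟨Df, ?_⟩, ?_⟩
    · intro m hm
      apply hDf
      intro h
      apply hm
      show c • f m = 0
      rw [h, smul_zero]
    · intro a ha ι κ hι hκ
      show c • f _ = c • f _
      rw [hf a ha ι κ hι hκ]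

/-- Index shift used by the free analogue of zero insertion: indices with
coordinate `≥ k` along axis `a` are shifted up by one (axis `0` = rows). -/
def liftIdx (a : Fin 2) (k : ℕ) (i : ℕ × ℕ) : ℕ × ℕ :=
  if a = 0 then (if i.1 < k then i else (i.1 + 1, i.2))
  else (if i.2 < k then i else (i.1, i.2 + 1))

/-- The free analogue of zero insertion on formal power series: the algebra
endomorphism sending `x_i ↦ x_i` for `i_a < k`, `x_i ↦ 0` for `i_a = k` and
`x_i ↦ x_{i - e_a}` for `i_a > k` (0-based position `k`).  On coefficient
functions it is given by precomposition with the index lift. -/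
noncomputable def zeroF {R : Type*} [CommRing R] (a : Fin 2) (k : ℕ)
    (f : Mon → R) : Mon → R :=
  fun m => f (m.mapDomain (liftIdx a k))

/-- The quasi-shuffle summand `c^{p,q}` for `ℕ₀`-matrices. -/
noncomputable def nQshMat (a b : NMat) {j k : ℕ}
    (p : Fin (a.rows + b.rows) → Fin j) (q : Fin (a.cols + b.cols) → Fin k) :
    NMat where
  rows := j
  cols := k
  entry := fun x y =>
    if hx : x < j then
      if hy : y < k then
        ∑ u ∈ Finset.univ.filter (fun u => p u = ⟨x, hx⟩),
          ∑ v ∈ Finset.univ.filter (fun v => q v = ⟨y, hy⟩),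
            (a.diag b).entry u v
      else 0
    else 0
  entry_eq_zero := by
    intro x y h
    try dsimp only
    split_ifs with hx hy
    · exact absurd h (by omega)
    · rfl
    · rfl

/-- One-dimensional two-parameter sums signature coefficient `⟨SS(Z), a⟩`. -/
noncomputable def SScN {K : Type*} [CommRing K] (Z : ℕ × ℕ → K) (a : NMat) : K :=
  ∑ᶠ ι ∈ {f : Fin a.rows → ℕ | StrictMono f},
    ∑ᶠ κ ∈ {g : Fin a.cols → ℕ | StrictMono g},
      ∏ s : Fin a.rows, ∏ t : Fin a.cols, Z (ι s, κ t) ^ a.entry s t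

/-- Evaluation of a formal power series at finitely supported data. -/
noncomputable def evalSeries {K : Type*} [CommRing K] (f : Mon → K)
    (Z : ℕ × ℕ → K) : K :=
  ∑ᶠ m : Mon, f m * m.prod fun i e => Z i ^ e

end TwoParam

/-! Row `x` of `c^{p,q}` is `p u` for some row `u` of `diag(a,b)` (surjectivity of `p`), and `u`
carries a non-`ε` entry `(u, v)`. That entry is one of the terms making up `c^{p,q}_{p u, q v}`,
and in the free commutative monoid a product is `ε` only if every factor is; columns likewise.
Since `c^{p,q}` just regroups the entries of `diag(a,b)` along the fibres of `p × q` and `ω` is a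
homomorphism, `ω(c^{p,q}) = ω(diag(a,b)) = ω(a) + ω(b)`. -/

open Finset

namespace TwoParam.RawMat

variable {d : ℕ}

lemma weight_eq_sum_degree (a : RawMat d) :
    a.weight = ∑ i ∈ range a.rows, ∑ j ∈ range a.cols, (a.entry i j).degree :=
  rfl

lemma weight_eq_sum_fin (a : RawMat d) :
    a.weight = ∑ i : Fin a.rows, ∑ j : Fin a.cols, (a.entry i j).degree := by
  simp only [weight_eq_sum_degree, sum_range]

lemma diag_entry_of_lt (a b : RawMat d) {u v : ℕ} (hu : u < a.rows) (hv : v < a.cols) :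
    (a.diag b).entry u v = a.entry u v :=
  if_pos ⟨hu, hv⟩

lemma diag_entry_add_add (a b : RawMat d) (u v : ℕ) :
    (a.diag b).entry (a.rows + u) (a.cols + v) = b.entry u v := by
  simp [diag]

lemma diag_entry_add_right (a b : RawMat d) {u : ℕ} (hu : u < a.rows) (v : ℕ) :
    (a.diag b).entry u (a.cols + v) = 0 := by
  simp [diag]; omega

lemma diag_entry_add_left (a b : RawMat d) (u : ℕ) {v : ℕ} (hv : v < a.cols) :
    (a.diag b).entry (a.rows + u) v = 0 := by
  simp [diag]; omega

theorem weight_diag (a b : RawMat d) : (a.diag b).weight = a.weight + b.weight := by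
  change ∑ i ∈ range (a.rows + b.rows), ∑ j ∈ range (a.cols + b.cols),
    ((a.diag b).entry i j).degree = _
  simp only [weight_eq_sum_degree, sum_range_add]
  congr 1
  · refine sum_congr rfl fun u hu => ?_
    rw [mem_range] at hu
    simp only [diag_entry_add_right a b hu, map_zero, sum_const_zero, add_zero]
    exact sum_congr rfl fun v hv => by rw [diag_entry_of_lt a b hu (mem_range.1 hv)]
  · refine sum_congr rfl fun u _ => ?_
    rw [sum_eq_zero fun v hv => by rw [diag_entry_add_left a b u (mem_range.1 hv), map_zero],
      zero_add]
    simp only [diag_entry_add_add]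

theorem IsComp.diag {a b : RawMat d} (ha : a.IsComp) (hb : b.IsComp) : (a.diag b).IsComp := by
  constructor
  · intro u hu
    by_cases hua : u < a.rows
    · obtain ⟨v, hv, hne⟩ := ha.1 u hua
      exact ⟨v, by simp only [RawMat.diag]; omega, by rwa [diag_entry_of_lt a b hua hv]⟩
    · obtain ⟨v, hv, hne⟩ := hb.1 (u - a.rows) (by simp only [RawMat.diag] at hu; omega)
      refine ⟨a.cols + v, by simp only [RawMat.diag]; omega, ?_⟩
      rwa [← Nat.add_sub_of_le (not_lt.1 hua), diag_entry_add_add]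
  · intro v hv
    by_cases hva : v < a.cols
    · obtain ⟨u, hu, hne⟩ := ha.2 v hva
      exact ⟨u, by simp only [RawMat.diag]; omega, by rwa [diag_entry_of_lt a b hu hva]⟩
    · obtain ⟨u, hu, hne⟩ := hb.2 (v - a.cols) (by simp only [RawMat.diag] at hv; omega)
      refine ⟨a.rows + u, by simp only [RawMat.diag]; omega, ?_⟩
      rwa [← Nat.add_sub_of_le (not_lt.1 hva), diag_entry_add_add]

end TwoParam.RawMat

namespace TwoParam

variable {d : ℕ} (a b : RawMat d) {j k : ℕ}
  (p : Fin (a.rows + b.rows) → Fin j) (q : Fin (a.cols + b.cols) → Fin k)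

lemma qshMat_entry (x : Fin j) (y : Fin k) :
    (qshMat a b p q).entry x y =
      ∑ u with p u = x, ∑ v with q v = y, (a.diag b).entry u v := by
  simp only [qshMat, dif_pos x.isLt, dif_pos y.isLt, Fin.eta]

lemma qshMat_entry_ne_zero {u : Fin (a.rows + b.rows)} {v : Fin (a.cols + b.cols)}
    (h : (a.diag b).entry u v ≠ 0) : (qshMat a b p q).entry (p u) (q v) ≠ 0 := by
  rw [qshMat_entry, Ne, sum_eq_zero_iff]
  exact fun h0 => h (sum_eq_zero_iff.1 (h0 u (by simp)) v (by simp))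

theorem weight_qshMat : (qshMat a b p q).weight = (a.diag b).weight := by
  rw [RawMat.weight_eq_sum_fin, RawMat.weight_eq_sum_fin]
  change ∑ x : Fin j, ∑ y : Fin k, ((qshMat a b p q).entry x y).degree = _
  simp only [qshMat_entry, map_sum]
  calc _ = ∑ x, ∑ u with p u = x, ∑ y, ∑ v with q v = y, ((a.diag b).entry u v).degree :=
        sum_congr rfl fun _ _ => sum_comm
    _ = _ := by simp only [sum_fiberwise]; rfl

theorem isComp_qshMat (hc : (a.diag b).IsComp) (hp : Function.Surjective p)
    (hq : Function.Surjective q) : (qshMat a b p q).IsComp := by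
  constructor
  · intro x hx
    obtain ⟨u, hu⟩ := hp ⟨x, hx⟩
    obtain ⟨v, hv, hne⟩ := hc.1 u u.isLt
    refine ⟨q ⟨v, hv⟩, (q _).isLt, ?_⟩
    simpa [hu] using qshMat_entry_ne_zero a b p q (v := ⟨v, hv⟩) hne
  · intro y hy
    obtain ⟨v, hv⟩ := hq ⟨y, hy⟩
    obtain ⟨u, hu, hne⟩ := hc.2 v v.isLt
    refine ⟨p ⟨u, hu⟩, (p _).isLt, ?_⟩
    simpa [hv] using qshMat_entry_ne_zero a b p q (u := ⟨u, hu⟩) hne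

end TwoParam

open TwoParam in
/-- every quasi-shuffle summand `c^{p,q}` of two matrix
compositions is a matrix composition, of weight `ω(a) + ω(b)`. -/
theorem statement3 {d : ℕ} (a b : RawMat d) (ha : a.IsComp) (hb : b.IsComp)
    {j k : ℕ} (p : Fin (a.rows + b.rows) → Fin j)
    (q : Fin (a.cols + b.cols) → Fin k)
    (hp : p ∈ qShSet a.rows b.rows j) (hq : q ∈ qShSet a.cols b.cols k) :
    (qshMat a b p q).IsComp ∧
      (qshMat a b p q).weight = a.weight + b.weight := by
  obtain ⟨hp_surj, -, -⟩ := (mem_filter.1 hp).2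
  obtain ⟨hq_surj, -, -⟩ := (mem_filter.1 hq).2
  exact ⟨isComp_qshMat a b p q (ha.diag hb) hp_surj hq_surj,
    (weight_qshMat a b p q).trans (a.weight_diag b)⟩
end

section
/- Let ∼_Zero denote the equivalence relation on evZ generated by A ∼ Zero_{a,k}(A) for all a ∈ {1,2} and k ∈ ℕ. Then for all A, B ∈ evZ: A ∼_Zero B if and only if ⟨SS(A), a⟩ = ⟨SS(B), a⟩ for every matrix composition a over M_d. -/
open scoped Classical

/-!
Zero insertion re-indexes the data along a strictly increasing map of the rows (or columns) and
fills the new row with zeros. Summands of a composition never see such a row: a composition has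
no row or column of `ε`'s, so a summand vanishes as soon as one of its rows or columns meets
only zeros. Hence the signature is invariant.

Conversely, deleting zero rows and columns brings every finitely supported `A` to a compressed
form: supported in an `m × n` box, with no zero row or column inside it. For compressed `A`, the
composition placing at `(s, t)` one generator that does not vanish at `A (s, t)` has a single
nonzero summand at `A`, so a compressed `B` with the same signature lives in the same box; adding
one more generator `j` at `(s, t)` multiplies that coefficient by `A (s, t) j`, so the signature
determines every entry.
-/

namespace TwoParam

variable {d : ℕ} {R : Type*} [CommRing R]

lemma evalMon_zero_index (z : Fin d → R) : evalMon z 0 = 1 :=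
  Finsupp.prod_zero_index

lemma evalMon_single_one (z : Fin d → R) (j : Fin d) : evalMon z (Finsupp.single j 1) = z j := by
  simp [evalMon]

lemma evalMon_add_index (z : Fin d → R) (m₁ m₂ : Md d) :
    evalMon z (m₁ + m₂) = evalMon z m₁ * evalMon z m₂ :=
  Finsupp.prod_add_index' (fun j => pow_zero (z j)) fun j => pow_add (z j)

lemma evalMon_zero_left {m : Md d} (hm : m ≠ 0) : evalMon (0 : Fin d → R) m = 0 := by
  obtain ⟨j, hj⟩ := Finsupp.ne_iff.mp hm
  exact Finset.prod_eq_zero (Finsupp.mem_support_iff.mpr hj) (zero_pow hj)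

lemma le_of_strictMono_of_forall_lt {m N : ℕ} {ι : Fin m → ℕ} (hι : StrictMono ι)
    (h : ∀ s, ι s < N) : m ≤ N := by
  simpa using Fintype.card_le_of_injective (fun s => (⟨ι s, h s⟩ : Fin N))
    fun s t hst => hι.injective (congrArg Fin.val hst)

lemma eq_val_of_strictMono_of_forall_lt {m : ℕ} {ι : Fin m → ℕ} (hι : StrictMono ι)
    (h : ∀ s, ι s < m) : ι = fun s : Fin m => (s : ℕ) := by
  have hid : StrictMono fun s => (⟨ι s, h s⟩ : Fin m) := fun s t hst => hι hst
  funext s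
  exact congrArg Fin.val (congrFun hid.eq_id s)

lemma finsum_mem_strictMono_comp {M : Type*} [AddCommMonoid M] {m : ℕ} {φ : ℕ → ℕ}
    (hφ : StrictMono φ) {f : (Fin m → ℕ) → M} (hf : ∀ ι, f ι ≠ 0 → ∀ s, ι s ∈ Set.range φ) :
    ∑ᶠ ι ∈ {ι : Fin m → ℕ | StrictMono ι}, f ι =
      ∑ᶠ ι ∈ {ι : Fin m → ℕ | StrictMono ι}, f (φ ∘ ι) := by
  rw [← finsum_mem_image (hφ.injective.comp_left.injOn)]
  refine finsum_mem_inter_support_eq' _ _ _ fun ι hι => ⟨fun hmono => ?_, ?_⟩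
  · choose ι' hι' using hf ι hι
    exact ⟨ι', fun s t hst => hφ.lt_iff_lt.mp (by simpa only [hι'] using hmono hst), funext hι'⟩
  · rintro ⟨ι', hι', rfl⟩
    exact hφ.comp hι'

lemma finsum_mem_eq_of_forall_ne_zero {α M : Type*} [AddCommMonoid M] {s : Set α} {f : α → M}
    {a : α} (ha : a ∈ s) (hf : ∀ x ∈ s, f x ≠ 0 → x = a) : ∑ᶠ x ∈ s, f x = f a := by
  rw [finsum_mem_inter_support_eq' f s {a} fun x hx => ⟨fun hxs => hf x hxs hx, ?_⟩,
    finsum_mem_singleton]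
  rintro rfl
  exact ha

def sigTerm (Z : ℕ × ℕ → Fin d → R) (a : RawMat d) (ι : Fin a.rows → ℕ)
    (κ : Fin a.cols → ℕ) : R :=
  ∏ s : Fin a.rows, ∏ t : Fin a.cols, evalMon (Z (ι s, κ t)) (a.entry s t)

lemma SSc_eq_finsum_sigTerm (Z : ℕ × ℕ → Fin d → R) (a : RawMat d) :
    SSc Z a = ∑ᶠ ι ∈ {ι : Fin a.rows → ℕ | StrictMono ι},
      ∑ᶠ κ ∈ {κ : Fin a.cols → ℕ | StrictMono κ}, sigTerm Z a ι κ :=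
  rfl

lemma exists_sigTerm_ne_zero {Z : ℕ × ℕ → Fin d → R} {a : RawMat d} (h : SSc Z a ≠ 0) :
    ∃ ι κ, StrictMono ι ∧ StrictMono κ ∧ sigTerm Z a ι κ ≠ 0 := by
  obtain ⟨ι, hι, hne⟩ := exists_ne_zero_of_finsum_mem_ne_zero h
  obtain ⟨κ, hκ, hne⟩ := exists_ne_zero_of_finsum_mem_ne_zero hne
  exact ⟨ι, κ, hι, hκ, hne⟩

lemma RawMat.IsComp.exists_ne_zero_of_sigTerm_ne_zero {Z : ℕ × ℕ → Fin d → R} {a : RawMat d}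
    (ha : a.IsComp) {ι : Fin a.rows → ℕ} {κ : Fin a.cols → ℕ} (h : sigTerm Z a ι κ ≠ 0) :
    (∀ s, ∃ t, Z (ι s, κ t) ≠ 0) ∧ (∀ t, ∃ s, Z (ι s, κ t) ≠ 0) := by
  have hentry : ∀ (s : Fin a.rows) (t : Fin a.cols), a.entry s t ≠ 0 → Z (ι s, κ t) ≠ 0 :=
    fun s t hst hZ => h <| Finset.prod_eq_zero (Finset.mem_univ s) <|
      Finset.prod_eq_zero (Finset.mem_univ t) <| hZ ▸ evalMon_zero_left hst
  refine ⟨fun s => ?_, fun t => ?_⟩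
  · obtain ⟨t, ht, hne⟩ := ha.1 s s.isLt
    exact ⟨⟨t, ht⟩, hentry s _ hne⟩
  · obtain ⟨s, hs, hne⟩ := ha.2 t t.isLt
    exact ⟨⟨s, hs⟩, hentry _ t hne⟩

theorem SSc_eq_of_strictMono {Z Z' : ℕ × ℕ → Fin d → R} {φ ψ : ℕ → ℕ} (hφ : StrictMono φ)
    (hψ : StrictMono ψ) (hZ : ∀ x y, Z' (φ x, ψ y) = Z (x, y))
    (hsupp : Function.support Z' ⊆ Set.range φ ×ˢ Set.range ψ) {a : RawMat d} (ha : a.IsComp) :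
    SSc Z' a = SSc Z a := by
  have hterm : ∀ ι κ, sigTerm Z' a ι κ ≠ 0 →
      (∀ s, ι s ∈ Set.range φ) ∧ ∀ t, κ t ∈ Set.range ψ := fun ι κ h =>
    have hne := ha.exists_ne_zero_of_sigTerm_ne_zero h
    ⟨fun s => (hsupp (hne.1 s).choose_spec).1, fun t => (hsupp (hne.2 t).choose_spec).2⟩
  rw [SSc_eq_finsum_sigTerm, SSc_eq_finsum_sigTerm, finsum_mem_strictMono_comp hφ]
  · refine finsum_mem_congr rfl fun ι _ => ?_
    rw [finsum_mem_strictMono_comp hψ fun κ h => (hterm _ κ h).2]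
    simp only [sigTerm, Function.comp_apply, hZ]
  · intro ι h s
    obtain ⟨κ, -, hκ⟩ := exists_ne_zero_of_finsum_mem_ne_zero h
    exact (hterm ι κ hκ).1 s

def skip (k x : ℕ) : ℕ := if x < k then x else x + 1

lemma skip_strictMono (k : ℕ) : StrictMono (skip k) := fun x y hxy => by
  unfold skip
  split_ifs <;> omega

lemma mem_range_skip {k x : ℕ} : x ∈ Set.range (skip k) ↔ x ≠ k := by
  refine ⟨?_, fun hx => ⟨if x < k then x else x - 1, ?_⟩⟩
  · rintro ⟨y, rfl⟩
    unfold skip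
    split_ifs <;> omega
  · unfold skip
    split_ifs <;> omega

section ZeroInsertion

variable {V : Type*} [Zero V]

lemma zeroIns_zero_apply (k : ℕ) (X : ℕ × ℕ → V) (x y : ℕ) :
    zeroIns 0 k X (x, y) = if x < k then X (x, y) else if x = k then 0 else X (x - 1, y) := by
  simp [zeroIns, axC, shiftD]

lemma zeroIns_one_apply (k : ℕ) (X : ℕ × ℕ → V) (x y : ℕ) :
    zeroIns 1 k X (x, y) = if y < k then X (x, y) else if y = k then 0 else X (x, y - 1) := by
  simp [zeroIns, axC, shiftD]

lemma zeroIns_zero_skip (k : ℕ) (X : ℕ × ℕ → V) (x y : ℕ) :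
    zeroIns 0 k X (skip k x, y) = X (x, y) := by
  rw [zeroIns_zero_apply, skip]
  split_ifs <;> first | rfl | omega

lemma zeroIns_one_skip (k : ℕ) (X : ℕ × ℕ → V) (x y : ℕ) :
    zeroIns 1 k X (x, skip k y) = X (x, y) := by
  rw [zeroIns_one_apply, skip]
  split_ifs <;> first | rfl | omega

lemma zeroIns_zero_of_row_eq_zero {k : ℕ} {X : ℕ × ℕ → V} (hX : ∀ y, X (k, y) = 0) :
    zeroIns 0 k (fun i => X (skip k i.1, i.2)) = X := by
  funext ⟨x, y⟩
  rw [zeroIns_zero_apply, skip, skip]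
  split_ifs <;> first | rfl | (subst_vars; exact (hX y).symm) | (congr 2; omega)

lemma zeroIns_one_of_col_eq_zero {k : ℕ} {X : ℕ × ℕ → V} (hX : ∀ x, X (x, k) = 0) :
    zeroIns 1 k (fun i => X (i.1, skip k i.2)) = X := by
  funext ⟨x, y⟩
  rw [zeroIns_one_apply, skip, skip]
  split_ifs <;> first | rfl | (subst_vars; exact (hX x).symm) | (congr 2; omega)

end ZeroInsertion

theorem SSc_zeroIns (X : ℕ × ℕ → Fin d → R) (ax : Fin 2) (k : ℕ) {a : RawMat d}
    (ha : a.IsComp) : SSc (zeroIns ax k X) a = SSc X a := by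
  fin_cases ax
  · refine SSc_eq_of_strictMono (skip_strictMono k) strictMono_id (zeroIns_zero_skip k X)
      (fun ⟨x, y⟩ h => ⟨mem_range_skip.mpr fun hx => h ?_, y, rfl⟩) ha
    obtain rfl : x = k := hx
    simp [zeroIns_zero_apply]
  · refine SSc_eq_of_strictMono strictMono_id (skip_strictMono k) (zeroIns_one_skip k X)
      (fun ⟨x, y⟩ h => ⟨⟨x, rfl⟩, mem_range_skip.mpr fun hy => h ?_⟩) ha
    obtain rfl : y = k := hy
    simp [zeroIns_one_apply]

def ZeroInsRel {V : Type*} [Zero V] (X Y : ℕ × ℕ → V) : Prop :=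
  ∃ (a : Fin 2) (k : ℕ), Y = zeroIns a k X

theorem SSc_eq_of_eqvGen {A B : ℕ × ℕ → Fin d → R} (h : Relation.EqvGen ZeroInsRel A B)
    {a : RawMat d} (ha : a.IsComp) : SSc A a = SSc B a := by
  induction h with
  | rel X Y hXY =>
    obtain ⟨ax, k, rfl⟩ := hXY
    exact (SSc_zeroIns X ax k ha).symm
  | refl => rfl
  | symm _ _ _ ih => exact ih.symm
  | trans _ _ _ _ _ ih₁ ih₂ => exact ih₁.trans ih₂

section Compression

variable {V : Type*} [Zero V]

def IsSupportedIn (A : ℕ × ℕ → V) (m n : ℕ) : Prop :=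
  ∀ i, A i ≠ 0 → i.1 < m ∧ i.2 < n

def IsCompressed (A : ℕ × ℕ → V) (m n : ℕ) : Prop :=
  IsSupportedIn A m n ∧ (∀ r < m, ∃ c, A (r, c) ≠ 0) ∧ ∀ c < n, ∃ r, A (r, c) ≠ 0

lemma IsSupportedIn.apply_eq_zero {A : ℕ × ℕ → V} {m n : ℕ} (hA : IsSupportedIn A m n)
    {i : ℕ × ℕ} (hi : ¬(i.1 < m ∧ i.2 < n)) : A i = 0 :=
  not_not.mp fun h => hi (hA i h)

lemma EvZ.exists_isSupportedIn {A : ℕ × ℕ → V} (hA : EvZ A) : ∃ m n, IsSupportedIn A m n := by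
  obtain ⟨⟨M, N⟩, hMN⟩ := hA.bddAbove
  exact ⟨M + 1, N + 1, fun i hi => by
    have := hMN hi
    exact ⟨Nat.lt_succ_of_le this.1, Nat.lt_succ_of_le this.2⟩⟩

lemma IsSupportedIn.exists_zeroInsRel_of_row_eq_zero {A : ℕ × ℕ → V} {m n r : ℕ}
    (hA : IsSupportedIn A (m + 1) n) (hr : r ≤ m) (hrow : ∀ c, A (r, c) = 0) :
    ∃ B, IsSupportedIn B m n ∧ ZeroInsRel B A := by
  refine ⟨fun i => A (skip r i.1, i.2), fun ⟨x, y⟩ h => ?_,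
    0, r, (zeroIns_zero_of_row_eq_zero hrow).symm⟩
  have hxr : skip r x ≠ r := fun hx => h (by simp only [hx, hrow])
  have := hA _ h
  simp only [skip] at this hxr ⊢
  split_ifs at this hxr <;> omega

lemma IsSupportedIn.exists_zeroInsRel_of_col_eq_zero {A : ℕ × ℕ → V} {m n c : ℕ}
    (hA : IsSupportedIn A m (n + 1)) (hc : c ≤ n) (hcol : ∀ r, A (r, c) = 0) :
    ∃ B, IsSupportedIn B m n ∧ ZeroInsRel B A := by
  refine ⟨fun i => A (i.1, skip c i.2), fun ⟨x, y⟩ h => ?_,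
    1, c, (zeroIns_one_of_col_eq_zero hcol).symm⟩
  have hyc : skip c y ≠ c := fun hy => h (by simp only [hy, hcol])
  have := hA _ h
  simp only [skip] at this hyc ⊢
  split_ifs at this hyc <;> omega

theorem IsSupportedIn.exists_isCompressed {A : ℕ × ℕ → V} {m n : ℕ}
    (hA : IsSupportedIn A m n) :
    ∃ A' m' n', Relation.EqvGen ZeroInsRel A A' ∧ IsCompressed A' m' n' := by
  induction hN : m + n generalizing A m n with
  | zero => exact ⟨A, m, n, .refl A, hA, fun r hr => by omega, fun c hc => by omega⟩
  | succ N ih =>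
    have step : ∀ {B m' n'}, IsSupportedIn B m' n' → m' + n' = N → ZeroInsRel B A →
        ∃ A' m' n', Relation.EqvGen ZeroInsRel A A' ∧ IsCompressed A' m' n' :=
      fun hB hN' hBA =>
        let ⟨A', m', n', hBA', hA'⟩ := ih hB hN'
        ⟨A', m', n', .trans _ _ _ (.symm _ _ (.rel _ _ hBA)) hBA', hA'⟩
    by_cases hrow : ∀ r < m, ∃ c, A (r, c) ≠ 0
    · by_cases hcol : ∀ c < n, ∃ r, A (r, c) ≠ 0
      · exact ⟨A, m, n, .refl A, hA, hrow, hcol⟩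
      · push Not at hcol
        obtain ⟨c, hc, hcol⟩ := hcol
        obtain ⟨n, rfl⟩ : ∃ n', n = n' + 1 := ⟨n - 1, by omega⟩
        obtain ⟨B, hB, hBA⟩ := hA.exists_zeroInsRel_of_col_eq_zero (by omega) hcol
        exact step hB (by omega) hBA
    · push Not at hrow
      obtain ⟨r, hr, hrow⟩ := hrow
      obtain ⟨m, rfl⟩ : ∃ m', m = m' + 1 := ⟨m - 1, by omega⟩
      obtain ⟨B, hB, hBA⟩ := hA.exists_zeroInsRel_of_row_eq_zero (by omega) hrow
      exact step hB (by omega) hBA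

end Compression

lemma SSc_eq_sigTerm_val {Z : ℕ × ℕ → Fin d → R} {a : RawMat d} (ha : a.IsComp)
    (hZ : IsSupportedIn Z a.rows a.cols) : SSc Z a = sigTerm Z a Fin.val Fin.val := by
  have hval : ∀ ι κ, StrictMono ι → StrictMono κ → sigTerm Z a ι κ ≠ 0 →
      ι = Fin.val ∧ κ = Fin.val := fun ι κ hι hκ h =>
    have hne := ha.exists_ne_zero_of_sigTerm_ne_zero h
    ⟨eq_val_of_strictMono_of_forall_lt hι fun s => (hZ _ (hne.1 s).choose_spec).1,
      eq_val_of_strictMono_of_forall_lt hκ fun t => (hZ _ (hne.2 t).choose_spec).2⟩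
  rw [SSc_eq_finsum_sigTerm, finsum_mem_eq_of_forall_ne_zero Fin.val_strictMono fun ι hι h => ?_,
    finsum_mem_eq_of_forall_ne_zero (s := {κ | StrictMono κ}) Fin.val_strictMono
      fun κ hκ h => (hval _ κ Fin.val_strictMono hκ h).2]
  obtain ⟨κ, hκ, h⟩ := exists_ne_zero_of_finsum_mem_ne_zero h
  exact (hval ι κ hι hκ h).1

lemma le_of_SSc_ne_zero {Z : ℕ × ℕ → Fin d → R} {a : RawMat d} (ha : a.IsComp) {m n : ℕ}
    (hZ : IsSupportedIn Z m n) (h : SSc Z a ≠ 0) : a.rows ≤ m ∧ a.cols ≤ n := by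
  obtain ⟨ι, κ, hι, hκ, h⟩ := exists_sigTerm_ne_zero h
  obtain ⟨hrow, hcol⟩ := ha.exists_ne_zero_of_sigTerm_ne_zero h
  exact ⟨le_of_strictMono_of_forall_lt hι fun s => (hZ _ (hrow s).choose_spec).1,
    le_of_strictMono_of_forall_lt hκ fun t => (hZ _ (hcol t).choose_spec).2⟩

noncomputable def nonvanishingMon (v : Fin d → R) : Md d :=
  if h : v = 0 then 0 else Finsupp.single (Function.ne_iff.mp h).choose 1

lemma nonvanishingMon_ne_zero {v : Fin d → R} (hv : v ≠ 0) : nonvanishingMon v ≠ 0 := by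
  simp [nonvanishingMon, hv]

lemma evalMon_nonvanishingMon_ne_zero [Nontrivial R] (v : Fin d → R) :
    evalMon v (nonvanishingMon v) ≠ 0 := by
  unfold nonvanishingMon
  split_ifs with hv
  · simp [evalMon_zero_index]
  · rw [evalMon_single_one]
    exact (Function.ne_iff.mp hv).choose_spec

noncomputable def witnessProd (Z A : ℕ × ℕ → Fin d → R) (m n : ℕ) : R :=
  ∏ s : Fin m, ∏ t : Fin n, evalMon (Z (s, t)) (nonvanishingMon (A (s, t)))

lemma witnessProd_self_ne_zero [IsDomain R] (A : ℕ × ℕ → Fin d → R) (m n : ℕ) :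
    witnessProd A A m n ≠ 0 :=
  Finset.prod_ne_zero_iff.mpr fun _ _ => Finset.prod_ne_zero_iff.mpr fun _ _ =>
    evalMon_nonvanishingMon_ne_zero _

/-- The perturbation `e` lets single entries carry one generator more than needed to keep
`SSc A` nonzero. -/
noncomputable def witnessComp (A : ℕ × ℕ → Fin d → R) (m n : ℕ) (e : ℕ → ℕ → Md d) :
    RawMat d where
  rows := m
  cols := n
  entry s t := if s < m ∧ t < n then nonvanishingMon (A (s, t)) + e s t else 0
  entry_eq_zero s t h := if_neg (by omega)

lemma IsCompressed.isComp_witnessComp {A : ℕ × ℕ → Fin d → R} {m n : ℕ}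
    (hA : IsCompressed A m n) (e : ℕ → ℕ → Md d) : (witnessComp A m n e).IsComp := by
  have hentry : ∀ s t, s < m → t < n → A (s, t) ≠ 0 → (witnessComp A m n e).entry s t ≠ 0 :=
    fun s t hs ht hst => by
      simp [witnessComp, hs, ht, nonvanishingMon_ne_zero hst]
  refine ⟨fun s hs => ?_, fun t ht => ?_⟩
  · obtain ⟨t, ht⟩ := hA.2.1 s hs
    exact ⟨t, (hA.1 _ ht).2, hentry s t hs (hA.1 _ ht).2 ht⟩
  · obtain ⟨s, hs⟩ := hA.2.2 t ht
    exact ⟨s, (hA.1 _ hs).1, hentry s t (hA.1 _ hs).1 ht hs⟩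

lemma SSc_witnessComp {Z A : ℕ × ℕ → Fin d → R} {m n : ℕ} (hZ : IsSupportedIn Z m n)
    (hA : IsCompressed A m n) (e : ℕ → ℕ → Md d) :
    SSc Z (witnessComp A m n e) =
      witnessProd Z A m n * ∏ s : Fin m, ∏ t : Fin n, evalMon (Z (s, t)) (e s t) := by
  rw [SSc_eq_sigTerm_val (hA.isComp_witnessComp e) hZ, sigTerm, witnessProd,
    ← Finset.prod_mul_distrib]
  refine Finset.prod_congr rfl fun s _ => ?_
  rw [← Finset.prod_mul_distrib]
  refine Finset.prod_congr rfl fun t _ => ?_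
  dsimp only [witnessComp]
  rw [if_pos ⟨s.isLt, t.isLt⟩, evalMon_add_index]

lemma prod_evalMon_ite_single (Z : ℕ × ℕ → Fin d → R) {m n s₀ t₀ : ℕ} (hs₀ : s₀ < m)
    (ht₀ : t₀ < n) (j : Fin d) :
    ∏ s : Fin m, ∏ t : Fin n,
      evalMon (Z (s, t)) (if (s : ℕ) = s₀ ∧ (t : ℕ) = t₀ then Finsupp.single j 1 else 0) =
      Z (s₀, t₀) j := by
  rw [Fintype.prod_eq_single ⟨s₀, hs₀⟩ fun s hs => ?_, Fintype.prod_eq_single ⟨t₀, ht₀⟩ ?_]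
  · simp [evalMon_single_one]
  · intro t ht
    simp only [ne_eq, Fin.ext_iff] at ht
    simp [ht, evalMon_zero_index]
  · simp only [ne_eq, Fin.ext_iff] at hs
    simp [hs, evalMon_zero_index]

lemma IsCompressed.le_of_SSc_eq [IsDomain R] {A B : ℕ × ℕ → Fin d → R} {m n m' n' : ℕ}
    (hA : IsCompressed A m n) (hB : IsSupportedIn B m' n')
    (h : ∀ a : RawMat d, a.IsComp → SSc A a = SSc B a) : m ≤ m' ∧ n ≤ n' := by
  refine le_of_SSc_ne_zero (hA.isComp_witnessComp 0) hB ?_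
  rw [← h _ (hA.isComp_witnessComp 0), SSc_witnessComp hA.1 hA]
  simpa only [Pi.zero_apply, evalMon_zero_index, Finset.prod_const_one, mul_one]
    using witnessProd_self_ne_zero A m n

theorem IsCompressed.eq_of_SSc_eq [IsDomain R] {A B : ℕ × ℕ → Fin d → R} {m n m' n' : ℕ}
    (hA : IsCompressed A m n) (hB : IsCompressed B m' n')
    (h : ∀ a : RawMat d, a.IsComp → SSc A a = SSc B a) : A = B := by
  obtain ⟨hm, hn⟩ := hA.le_of_SSc_eq hB.1 h
  obtain ⟨hm', hn'⟩ := hB.le_of_SSc_eq hA.1 fun a ha => (h a ha).symm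
  obtain rfl : m = m' := le_antisymm hm hm'
  obtain rfl : n = n' := le_antisymm hn hn'
  have hPB : witnessProd B A m n = witnessProd A A m n := by
    have := h _ (hA.isComp_witnessComp 0)
    simpa [SSc_witnessComp hA.1 hA, SSc_witnessComp hB.1 hA, evalMon_zero_index] using this.symm
  funext ⟨s, t⟩ j
  by_cases hst : s < m ∧ t < n
  · have := h _ (hA.isComp_witnessComp fun x y => if x = s ∧ y = t then Finsupp.single j 1 else 0)
    rw [SSc_witnessComp hA.1 hA, SSc_witnessComp hB.1 hA, prod_evalMon_ite_single A hst.1 hst.2,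
      prod_evalMon_ite_single B hst.1 hst.2, hPB] at this
    exact mul_left_cancel₀ (witnessProd_self_ne_zero A m n) this
  · rw [hA.1.apply_eq_zero hst, hB.1.apply_eq_zero hst]

end TwoParam

open TwoParam in
/-- the two-parameter sums signature separates exactly the
equivalence classes of eventually zero functions up to zero insertion. -/
theorem statement6 {d : ℕ} {R : Type*} [CommRing R] [IsDomain R]
    (A B : ℕ × ℕ → Fin d → R) (hA : EvZ A) (hB : EvZ B) :
    Relation.EqvGen
        (fun X Y : ℕ × ℕ → Fin d → R =>
          ∃ (a : Fin 2) (k : ℕ), Y = zeroIns a k X) A B ↔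
      ∀ a : RawMat d, a.IsComp → SSc A a = SSc B a := by
  refine ⟨fun h a ha => SSc_eq_of_eqvGen h ha, fun h => ?_⟩
  obtain ⟨_, _, hAmn⟩ := hA.exists_isSupportedIn
  obtain ⟨_, _, hBmn⟩ := hB.exists_isSupportedIn
  obtain ⟨A', _, _, hAA', hA'⟩ := hAmn.exists_isCompressed
  obtain ⟨B', _, _, hBB', hB'⟩ := hBmn.exists_isCompressed
  have hA'B' : A' = B' := hA'.eq_of_SSc_eq hB' fun a ha => by
    rw [← SSc_eq_of_eqvGen hAA' ha, h a ha, SSc_eq_of_eqvGen hBB' ha]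
  subst hA'B'
  exact .trans _ _ _ hAA' (.symm _ _ hBB')
end

section
/- For all axes a ∈ {1,2} and all k ∈ ℕ: δ ∘ Warp_{a,k} = Zero_{a,k} ∘ δ as maps evC → evZ, and ς ∘ Zero_{a,k} = Warp_{a,k} ∘ ς as maps evZ → evC. -/
open scoped Classical

/-! Zero insertion `Zero_{a,k}` is extension by zero along the injective index map
`liftIdx a k`, which skips the hyperplane `i_a = k`, and `Warp_{a,k}` is precomposition with
`warpIdx a k`, a left inverse of `liftIdx a k`. The preimage of the quadrant `Ici i` under
`liftIdx a k` is the quadrant `Ici (warpIdx a k i)`, so reindexing the sum defining `ς` gives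
`ς ∘ Zero_{a,k} = Warp_{a,k} ∘ ς`. For `δ ∘ Warp_{a,k} = Zero_{a,k} ∘ δ`: off the hyperplane
`i_a = k` the warped `2 × 2` square is a square of `X` itself, and on it the square consists of
two duplicated pairs, whose alternating sum vanishes. -/

theorem finsum_mem_eq_finsum_mem_preimage {α β M : Type*} [AddCommMonoid M] {f : α → M}
    {g : β → α} (hg : Function.Injective g) (hf : Function.support f ⊆ Set.range g)
    (s : Set α) : ∑ᶠ p ∈ s, f p = ∑ᶠ q ∈ g ⁻¹' s, f (g q) := by
  rw [← finsum_mem_image hg.injOn, Set.image_preimage_eq_inter_range]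
  refine finsum_mem_inter_support_eq f _ _ ?_
  rw [Set.inter_assoc, Set.inter_eq_right.mpr hf]

namespace TwoParam

variable {V : Type*}

def warpIdx (a : Fin 2) (k : ℕ) (i : ℕ × ℕ) : ℕ × ℕ :=
  if axC a i ≤ k then i else shiftD a i

theorem warp_apply (a : Fin 2) (k : ℕ) (X : ℕ × ℕ → V) (i : ℕ × ℕ) :
    warp a k X i = X (warpIdx a k i) :=
  (apply_ite X _ _ _).symm

theorem diffOp_warp [AddCommGroup V] (a : Fin 2) (k : ℕ) (X : ℕ × ℕ → V) :
    diffOp (warp a k X) = zeroIns a k (diffOp X) := by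
  funext ⟨i, j⟩
  fin_cases a
  · rcases lt_trichotomy i k with h | rfl | h <;>
      simp (disch := omega) [diffOp, warp, zeroIns, axC, shiftD, if_pos, if_neg]
  · rcases lt_trichotomy j k with h | rfl | h <;>
      simp (disch := omega) [diffOp, warp, zeroIns, axC, shiftD, if_pos, if_neg]

theorem liftIdx_injective (a : Fin 2) (k : ℕ) : Function.Injective (liftIdx a k) := by
  rintro ⟨i, j⟩ ⟨i', j'⟩ h
  fin_cases a <;> simp only [liftIdx, Fin.zero_eta, Fin.mk_one, one_ne_zero, ↓reduceIte] at h <;>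
    split_ifs at h <;> simp only [Prod.mk.injEq] at h ⊢ <;> omega

theorem liftIdx_warpIdx {a : Fin 2} {k : ℕ} {i : ℕ × ℕ} (h : axC a i ≠ k) :
    liftIdx a k (warpIdx a k i) = i := by
  obtain ⟨i, j⟩ := i
  fin_cases a <;>
    simp only [liftIdx, warpIdx, axC, shiftD, Fin.zero_eta, Fin.mk_one, one_ne_zero,
      ↓reduceIte] at h ⊢ <;>
    split_ifs <;> simp only [Prod.mk.injEq, and_true, true_and] at * <;> omega

theorem zeroIns_liftIdx [Zero V] (a : Fin 2) (k : ℕ) (Z : ℕ × ℕ → V) (i : ℕ × ℕ) :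
    zeroIns a k Z (liftIdx a k i) = Z i := by
  obtain ⟨i, j⟩ := i
  fin_cases a <;>
    simp only [zeroIns, liftIdx, axC, shiftD, Fin.zero_eta, Fin.mk_one, one_ne_zero,
      ↓reduceIte] <;>
    split_ifs <;> first | rfl | omega

theorem support_zeroIns_subset [Zero V] (a : Fin 2) (k : ℕ) (Z : ℕ × ℕ → V) :
    Function.support (zeroIns a k Z) ⊆ Set.range (liftIdx a k) := by
  intro i hi
  refine ⟨warpIdx a k i, liftIdx_warpIdx fun h => hi ?_⟩
  simp [zeroIns, h]

theorem preimage_liftIdx_Ici (a : Fin 2) (k : ℕ) (i : ℕ × ℕ) :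
    liftIdx a k ⁻¹' Set.Ici i = Set.Ici (warpIdx a k i) := by
  ext ⟨p, q⟩
  obtain ⟨i, j⟩ := i
  fin_cases a <;>
    simp only [Set.mem_preimage, Set.mem_Ici, liftIdx, warpIdx, axC, shiftD, Fin.zero_eta,
      Fin.mk_one, one_ne_zero, ↓reduceIte] <;>
    split_ifs <;> simp only [Prod.mk_le_mk] <;> omega

theorem sigmaOp_apply [AddCommMonoid V] (Z : ℕ × ℕ → V) (i : ℕ × ℕ) :
    sigmaOp Z i = ∑ᶠ p ∈ Set.Ici i, Z p :=
  rfl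

theorem sigmaOp_zeroIns [AddCommMonoid V] (a : Fin 2) (k : ℕ) (Z : ℕ × ℕ → V) :
    sigmaOp (zeroIns a k Z) = warp a k (sigmaOp Z) := by
  funext i
  rw [warp_apply, sigmaOp_apply, sigmaOp_apply,
    finsum_mem_eq_finsum_mem_preimage (liftIdx_injective a k) (support_zeroIns_subset a k Z),
    preimage_liftIdx_Ici]
  simp only [zeroIns_liftIdx]

end TwoParam

open TwoParam in
theorem statement9_general {d : ℕ} {R : Type*} [CommRing R] :
    (∀ (a : Fin 2) (k : ℕ) (X : ℕ × ℕ → Fin d → R), EvC X →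
      diffOp (warp a k X) = zeroIns a k (diffOp X)) ∧
    (∀ (a : Fin 2) (k : ℕ) (Z : ℕ × ℕ → Fin d → R), EvZ Z →
      sigmaOp (zeroIns a k Z) = warp a k (sigmaOp Z)) :=
  ⟨fun a k X _ => diffOp_warp a k X, fun a k Z _ => sigmaOp_zeroIns a k Z⟩

open TwoParam in
/-- `δ ∘ Warp_{a,k} = Zero_{a,k} ∘ δ` on `evC` and
`ς ∘ Zero_{a,k} = Warp_{a,k} ∘ ς` on `evZ`. -/
theorem statement9 {d : ℕ} {R : Type*} [CommRing R] [IsDomain R] :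
    (∀ (a : Fin 2) (k : ℕ) (X : ℕ × ℕ → Fin d → R), EvC X →
      diffOp (warp a k X) = zeroIns a k (diffOp X)) ∧
    (∀ (a : Fin 2) (k : ℕ) (Z : ℕ × ℕ → Fin d → R), EvZ Z →
      sigmaOp (zeroIns a k Z) = warp a k (sigmaOp Z)) :=
  statement9_general
end
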